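/- arXiv:2111.13988 — 2 statements merged into one kernel-verified Lean document; each statement's English description precedes it below -/
import Mathlib

section
/- Let p be a prime, n ≥ 2 coprime to p, k a positive integer, and 1 ≤ i ≤ k. Fix b ∈ Z/(n^(p^k)−1)Z. The number of 'proper solutions' of R_b^(p^i)(x) = x, i.e., elements x with R_b^(p^i)(x) = x but R_b^(p^j)(x) ≠ x for all 0 ≤ j < i, is exactly n^(p^i) − n^(p^(i−1)). -/
/-!
Translating by `b` conjugates `R_b` to multiplication by `n`, so `R_b^l(x) = x` exactly when
`(n^l - 1)(x - b) = 0`. For `l = p^m` with `m ≤ k` the number `n^l - 1` divides the modulus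
`n^(p^k) - 1`, so this has exactly `n^l - 1` solutions. Since every `p^j` with `j < i` divides
`p^(i-1)`, the proper solutions are the fixed points of `R_b^(p^i)` that are not fixed points of
`R_b^(p^(i-1))`, and the count is a difference.
-/

open Function

theorem ZMod.natCast_mul_eq_zero_iff_cast_eq_zero {c e : ℕ} [NeZero (c * e)] (z : ZMod (c * e)) :
    (c : ZMod (c * e)) * z = 0 ↔ (z.cast : ZMod e) = 0 := by
  have hc : 0 < c := Nat.pos_of_ne_zero (left_ne_zero_of_mul (NeZero.ne (c * e)))
  rw [← ZMod.natCast_zmod_val z, ← Nat.cast_mul, ZMod.natCast_eq_zero_iff,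
    ZMod.cast_natCast (dvd_mul_left e c), ZMod.natCast_eq_zero_iff, Nat.mul_dvd_mul_iff_left hc]

theorem ZMod.card_natCast_mul_eq_zero {c M : ℕ} [NeZero M] (h : c ∣ M) :
    Nat.card {z : ZMod M // (c : ZMod M) * z = 0} = c := by
  obtain ⟨e, rfl⟩ := h
  have he : 0 < e := Nat.pos_of_ne_zero (right_ne_zero_of_mul (NeZero.ne (c * e)))
  let φ := (ZMod.castHom (dvd_mul_left e c) (ZMod e)).toAddMonoidHom
  have hker : Nat.card φ.ker * e = c * e := by
    have := φ.ker.card_mul_index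
    rwa [AddSubgroup.index_ker, AddMonoidHom.range_eq_top_of_surjective _
      (ZMod.castHom_surjective (dvd_mul_left e c)), AddSubgroup.card_top, Nat.card_zmod,
      Nat.card_zmod] at this
  calc Nat.card {z : ZMod (c * e) // (c : ZMod (c * e)) * z = 0}
      = Nat.card φ.ker :=
        Nat.card_congr (Equiv.subtypeEquivRight ZMod.natCast_mul_eq_zero_iff_cast_eq_zero)
    _ = c := Nat.eq_of_mul_eq_mul_right he hker

section Affine

variable {R : Type*} [CommRing R] (a b : R)

theorem iterate_affine_sub (l : ℕ) (x : R) :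
    (fun y => a * y - (a - 1) * b)^[l] x - b = a ^ l * (x - b) := by
  induction l with
  | zero => simp
  | succ l ih =>
    rw [iterate_succ_apply', pow_succ]
    linear_combination a * ih

theorem isPeriodicPt_affine_iff (l : ℕ) (x : R) :
    IsPeriodicPt (fun y => a * y - (a - 1) * b) l x ↔ (a ^ l - 1) * (x - b) = 0 := by
  rw [IsPeriodicPt, IsFixedPt, ← sub_left_inj (a := b), iterate_affine_sub, ← sub_eq_zero,
    ← sub_one_mul]

end Affine

theorem ZMod.card_ptsOfPeriod_affine {M : ℕ} [NeZero M] (a l : ℕ) (b : ZMod M)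
    (h : a ^ l - 1 ∣ M) :
    Nat.card (ptsOfPeriod (fun y : ZMod M => a * y - (a - 1) * b) l) = a ^ l - 1 := by
  have hal : 1 ≤ a ^ l := by
    by_contra! h0
    rw [Nat.lt_one_iff.mp h0, zero_tsub, zero_dvd_iff] at h
    exact NeZero.ne M h
  rw [← ZMod.card_natCast_mul_eq_zero h]
  refine Nat.card_congr (Equiv.subtypeEquiv (Equiv.subRight b) fun x => ?_)
  rw [mem_ptsOfPeriod, isPeriodicPt_affine_iff, Equiv.subRight_apply, Nat.cast_sub hal]
  push_cast
  rfl

theorem setOf_isPeriodicPt_pow_and_not_lower_eq_sdiff {α : Type*} (f : α → α) (p : ℕ) {i : ℕ}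
    (hi : i ≠ 0) :
    {x | IsPeriodicPt f (p ^ i) x ∧ ∀ j < i, ¬IsPeriodicPt f (p ^ j) x} =
      ptsOfPeriod f (p ^ i) \ ptsOfPeriod f (p ^ (i - 1)) := by
  ext x
  refine and_congr_right fun _ => ⟨fun h => h _ (by omega), fun h j hj hx => h ?_⟩
  exact hx.trans_dvd (pow_dvd_pow p (by omega))

theorem card_proper_solutions_general (p : ℕ) (hp : p.Prime) (n k i : ℕ) (hn : 2 ≤ n)
    (hi : 1 ≤ i) (hik : i ≤ k)
    (b : ZMod (n ^ p ^ k - 1)) :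
    Nat.card {x : ZMod (n ^ p ^ k - 1) //
      (fun y : ZMod (n ^ p ^ k - 1) => (n : ZMod (n ^ p ^ k - 1)) * y - (n - 1) * b)^[p ^ i] x = x ∧
      ∀ j < i,
        (fun y : ZMod (n ^ p ^ k - 1) =>
          (n : ZMod (n ^ p ^ k - 1)) * y - (n - 1) * b)^[p ^ j] x ≠ x} =
      n ^ p ^ i - n ^ p ^ (i - 1) := by
  have : NeZero (n ^ p ^ k - 1) :=
    ⟨by have := Nat.one_lt_pow (pow_ne_zero k hp.ne_zero) (by omega : 1 < n); omega⟩
  have hdvd {m : ℕ} (hm : m ≤ k) : n ^ p ^ m - 1 ∣ n ^ p ^ k - 1 :=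
    Nat.pow_sub_one_dvd_pow_sub_one n (pow_dvd_pow p hm)
  set f := fun y : ZMod (n ^ p ^ k - 1) => (n : ZMod (n ^ p ^ k - 1)) * y - (n - 1) * b
  have hsub : ptsOfPeriod f (p ^ (i - 1)) ⊆ ptsOfPeriod f (p ^ i) :=
    fun _ hx => hx.trans_dvd (pow_dvd_pow p (Nat.sub_le i 1))
  calc _ = Nat.card ↑(ptsOfPeriod f (p ^ i) \ ptsOfPeriod f (p ^ (i - 1))) := by
        rw [← setOf_isPeriodicPt_pow_and_not_lower_eq_sdiff f p (by omega)]; rfl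
    _ = (n ^ p ^ i - 1) - (n ^ p ^ (i - 1) - 1) := by
        rw [Nat.card_coe_set_eq, Set.ncard_sdiff hsub, ← Nat.card_coe_set_eq,
          ← Nat.card_coe_set_eq, ZMod.card_ptsOfPeriod_affine n _ b (hdvd hik),
          ZMod.card_ptsOfPeriod_affine n _ b (hdvd (by omega))]
    _ = n ^ p ^ i - n ^ p ^ (i - 1) := by
        have := Nat.one_le_pow (p ^ (i - 1)) n (by omega)
        omega

/-- The number of proper solutions of `R_b^(p^i)(x) = x` is `n^(p^i) - n^(p^(i-1))`. -/
theorem card_proper_solutions (p : ℕ) (hp : p.Prime) (n k i : ℕ) (hn : 2 ≤ n)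
    (hnp : Nat.Coprime n p) (hi : 1 ≤ i) (hik : i ≤ k)
    (b : ZMod (n ^ p ^ k - 1)) :
    Nat.card {x : ZMod (n ^ p ^ k - 1) //
      (fun y : ZMod (n ^ p ^ k - 1) => (n : ZMod (n ^ p ^ k - 1)) * y - (n - 1) * b)^[p ^ i] x = x ∧
      ∀ j < i,
        (fun y : ZMod (n ^ p ^ k - 1) =>
          (n : ZMod (n ^ p ^ k - 1)) * y - (n - 1) * b)^[p ^ j] x ≠ x} =
      n ^ p ^ i - n ^ p ^ (i - 1) :=
  card_proper_solutions_general p hp n k i hn hi hik b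
end

section
/- Let p be a prime, n ≥ 2 coprime to p, k ≥ 1, and b ∈ Z/(n^(p^k)−1)Z. For each 1 ≤ i ≤ k, the permutation R_b(x) = nx − (n−1)b of Z/(n^(p^k)−1)Z has exactly (n^(p^i) − n^(p^(i−1)))/p^i cycles of length p^i, and exactly n − 1 fixed points. -/
open Function

/-- The number of solutions of `c * y = 0` in `ZMod m` is `c`, when `c ∣ m`, `c ≠ 0`. -/
lemma card_mulker (m c : ℕ) [NeZero m] (hc : c ∣ m) (hc0 : c ≠ 0) :
    Nat.card {y : ZMod m // (c : ZMod m) * y = 0} = c := by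
  have hm : m ≠ 0 := NeZero.ne m
  set φ : ZMod m →+ ZMod m := AddMonoidHom.mulLeft (c : ZMod m) with hφ
  have hker : ∀ y : ZMod m, y ∈ φ.ker ↔ (c : ZMod m) * y = 0 := fun y => Iff.rfl
  have hrange : φ.range = AddSubgroup.zmultiples ((c : ZMod m)) := by
    ext x
    simp only [AddMonoidHom.mem_range, AddSubgroup.mem_zmultiples_iff]
    constructor
    · rintro ⟨y, rfl⟩
      refine ⟨(y.val : ℤ), ?_⟩
      rw [zsmul_eq_mul]
      push_cast
      rw [ZMod.natCast_val, ZMod.cast_id, mul_comm]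
      rfl
    · rintro ⟨z, rfl⟩
      exact ⟨(z : ZMod m), by simp [hφ, zsmul_eq_mul, mul_comm]⟩
  have h1 : Nat.card (ZMod m) = Nat.card (ZMod m ⧸ φ.ker) * Nat.card φ.ker :=
    AddSubgroup.card_eq_card_quotient_mul_card_addSubgroup φ.ker
  have h2 : Nat.card (ZMod m ⧸ φ.ker) = Nat.card φ.range :=
    Nat.card_congr (QuotientAddGroup.quotientKerEquivRange φ).toEquiv
  have h3 : Nat.card φ.range = m / c := by
    rw [hrange, Nat.card_zmultiples, ZMod.addOrderOf_coe c hm, Nat.gcd_eq_right hc]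
  have h4 : Nat.card (ZMod m) = m := Nat.card_zmod m
  have hq : 0 < m / c := Nat.div_pos (Nat.le_of_dvd (Nat.pos_of_ne_zero hm) hc)
    (Nat.pos_of_ne_zero hc0)
  have h5 : Nat.card φ.ker = m / (m / c) := by
    rw [h4, h2, h3] at h1
    exact (Nat.div_eq_of_eq_mul_right hq h1).symm
  have h6 : Nat.card {y : ZMod m // (c : ZMod m) * y = 0} = Nat.card φ.ker :=
    Nat.card_congr (Equiv.subtypeEquivRight (fun y => (hker y).symm))
  rw [h6, h5, Nat.div_div_self hc hm]

lemma cycle_structure_aux (p : ℕ) (hp : p.Prime) (n k : ℕ) (hn : 2 ≤ n) (hk : 1 ≤ k)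
    (hnp : Nat.Coprime n p) (m : ℕ) (hm : m = n ^ p ^ k - 1) (b : ZMod m) :
    (∀ i, 1 ≤ i → i ≤ k →
      Nat.card {x : ZMod m //
        Function.minimalPeriod
          (fun y : ZMod m => (n : ZMod m) * y - (n - 1) * b) x
          = p ^ i} = p ^ i * ((n ^ p ^ i - n ^ p ^ (i - 1)) / p ^ i) ∧
      p ^ i ∣ n ^ p ^ i - n ^ p ^ (i - 1)) ∧
    Nat.card {x : ZMod m //
      (n : ZMod m) * x - (n - 1) * b = x} = n - 1 := by
  have hp1 : 1 < p := hp.one_lt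
  have hpk : 1 ≤ p ^ k := Nat.one_le_pow _ _ hp.pos
  have hnpk : 2 ≤ n ^ p ^ k := le_trans hn (Nat.le_self_pow (by omega) n)
  have hm1 : 1 ≤ m := by omega
  haveI : NeZero m := ⟨by omega⟩
  have hmadd : m + 1 = n ^ p ^ k := by omega
  set f : ZMod m → ZMod m := fun y => (n : ZMod m) * y - ((n : ZMod m) - 1) * b with hf
  set g : ZMod m → ZMod m := fun y => (n : ZMod m) * y with hg
  have hgit : ∀ (t : ℕ) (y : ZMod m), g^[t] y = (n : ZMod m) ^ t * y := by
    intro t y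
    show ((n : ZMod m) * ·)^[t] y = _
    rw [mul_left_iterate]
  have hcast : ((n : ZMod m)) ^ p ^ k = 1 := by
    have h : ((n ^ p ^ k : ℕ) : ZMod m) = ((m + 1 : ℕ) : ZMod m) := by rw [hmadd]
    push_cast at h
    rwa [ZMod.natCast_self, zero_add] at h
  -- conjugation
  have hit : ∀ (t : ℕ) (x : ZMod m), f^[t] x = g^[t] (x - b) + b := by
    intro t
    induction t with
    | zero => simp
    | succ t ih =>
      intro x
      rw [Function.iterate_succ_apply', Function.iterate_succ_apply', ih]
      show (n : ZMod m) * (g^[t] (x - b) + b) - ((n : ZMod m) - 1) * b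
          = (n : ZMod m) * g^[t] (x - b) + b
      ring
  have hper : ∀ (t : ℕ) (x : ZMod m), IsPeriodicPt f t x ↔ IsPeriodicPt g t (x - b) := by
    intro t x
    simp only [IsPeriodicPt, IsFixedPt, hit t x]
    exact eq_sub_iff_add_eq.symm
  have hconj : ∀ x : ZMod m, minimalPeriod f x = minimalPeriod g (x - b) := by
    intro x
    exact Nat.dvd_antisymm
      (((hper _ x).mpr (isPeriodicPt_minimalPeriod g (x - b))).minimalPeriod_dvd)
      (((hper _ x).mp (isPeriodicPt_minimalPeriod f x)).minimalPeriod_dvd)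
  -- divisor facts
  have hdvd_m : ∀ j, j ≤ k → n ^ p ^ j - 1 ∣ m := by
    intro j hj
    have hpow : n ^ p ^ k = (n ^ p ^ j) ^ p ^ (k - j) := by
      rw [← pow_mul, ← pow_add, Nat.add_sub_cancel' hj]
    have h := Nat.sub_dvd_pow_sub_pow (n ^ p ^ j) 1 (p ^ (k - j))
    rw [one_pow, ← hpow] at h
    rw [hm]
    exact h
  have hpow2 : ∀ j : ℕ, 2 ≤ n ^ p ^ j := fun j =>
    le_trans hn (Nat.le_self_pow (Nat.pos_of_ne_zero (by positivity)).ne' n)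
  -- counting points with period dividing p^j
  have hcount : ∀ j, j ≤ k →
      Nat.card {y : ZMod m // minimalPeriod g y ∣ p ^ j} = n ^ p ^ j - 1 := by
    intro j hj
    have hiff : ∀ y : ZMod m,
        minimalPeriod g y ∣ p ^ j ↔ ((n ^ p ^ j - 1 : ℕ) : ZMod m) * y = 0 := by
      intro y
      rw [← isPeriodicPt_iff_minimalPeriod_dvd]
      have hc : ((n ^ p ^ j - 1 : ℕ) : ZMod m) = (n : ZMod m) ^ p ^ j - 1 := by
        have h1 : 1 ≤ n ^ p ^ j := by have := hpow2 j; omega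
        push_cast [h1]
        rfl
      rw [hc]
      simp only [IsPeriodicPt, IsFixedPt, hgit, sub_one_mul, sub_eq_zero]
    rw [Nat.card_congr (Equiv.subtypeEquivRight hiff)]
    exact card_mulker m _ (hdvd_m j hj) (by have := hpow2 j; omega)
  have hperk : ∀ y : ZMod m, minimalPeriod g y ∣ p ^ k := by
    intro y
    apply Function.IsPeriodicPt.minimalPeriod_dvd
    show g^[p ^ k] y = y
    rw [hgit, hcast, one_mul]
  constructor
  · intro i hi1 hik
    -- arithmetic facts
    have hmono : n ^ p ^ (i - 1) ≤ n ^ p ^ i :=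
      Nat.pow_le_pow_right (by omega) (Nat.pow_le_pow_right hp.pos (by omega))
    have hdv : p ^ i ∣ n ^ p ^ i - n ^ p ^ (i - 1) := by
      have hc : Nat.Coprime n (p ^ i) := hnp.pow_right i
      have he : n ^ (p ^ i).totient ≡ 1 [MOD p ^ i] := Nat.ModEq.pow_totient hc
      have ht : (p ^ i).totient = p ^ (i - 1) * (p - 1) := Nat.totient_prime_pow hp (by omega)
      rw [ht] at he
      have hsplit : p ^ i = p ^ (i - 1) + p ^ (i - 1) * (p - 1) := by
        have h1 : p ^ i = p ^ (i - 1) * p := by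
          rw [← pow_succ]
          congr 1
          omega
        have h2 : p = 1 + (p - 1) := by omega
        calc p ^ i = p ^ (i - 1) * (1 + (p - 1)) := by rw [h1, ← h2]
        _ = p ^ (i - 1) + p ^ (i - 1) * (p - 1) := by rw [mul_add, mul_one]
      have hmodeq : n ^ p ^ i ≡ n ^ p ^ (i - 1) [MOD p ^ i] := by
        calc n ^ p ^ i = n ^ p ^ (i - 1) * n ^ (p ^ (i - 1) * (p - 1)) := by
              rw [← pow_add, ← hsplit]
        _ ≡ n ^ p ^ (i - 1) * 1 [MOD p ^ i] := Nat.ModEq.mul_left _ he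
        _ = n ^ p ^ (i - 1) := mul_one _
      exact (Nat.modEq_iff_dvd' hmono).mp hmodeq.symm
    refine ⟨?_, hdv⟩
    -- exact-period characterization
    have hiff2 : ∀ y : ZMod m, minimalPeriod g y = p ^ i ↔
        (minimalPeriod g y ∣ p ^ i ∧ ¬ minimalPeriod g y ∣ p ^ (i - 1)) := by
      intro y
      constructor
      · intro h
        rw [h]
        refine ⟨dvd_rfl, ?_⟩
        rw [Nat.pow_dvd_pow_iff_le_right hp1]
        omega
      · rintro ⟨h1, h2⟩
        obtain ⟨j, hj, hjeq⟩ := (Nat.dvd_prime_pow hp).mp h1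
        have hji : ¬ (j ≤ i - 1) := fun hle => h2 (hjeq ▸ pow_dvd_pow p hle)
        have : j = i := by omega
        rw [hjeq, this]
    -- transfer to g side
    have htrans : Nat.card {x : ZMod m // minimalPeriod f x = p ^ i}
        = Nat.card {y : ZMod m // minimalPeriod g y = p ^ i} :=
      Nat.card_congr ((Equiv.subRight b).subtypeEquiv (fun x => by
        rw [Equiv.subRight_apply, hconj x]))
    -- finset counting
    classical
    have hcard : ∀ (P : ZMod m → Prop) [DecidablePred P],
        Nat.card {y : ZMod m // P y} = (Finset.univ.filter P).card := by
      intro P _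
      rw [Nat.card_eq_fintype_card, Fintype.card_subtype]
    have hBA : (Finset.univ.filter fun y : ZMod m => minimalPeriod g y ∣ p ^ (i - 1))
        ⊆ (Finset.univ.filter fun y : ZMod m => minimalPeriod g y ∣ p ^ i) := by
      intro y hy
      simp only [Finset.mem_filter, Finset.mem_univ, true_and] at hy ⊢
      exact hy.trans (pow_dvd_pow p (by omega))
    have hE : (Finset.univ.filter fun y : ZMod m => minimalPeriod g y = p ^ i)
        = (Finset.univ.filter fun y : ZMod m => minimalPeriod g y ∣ p ^ i)
          \ (Finset.univ.filter fun y : ZMod m => minimalPeriod g y ∣ p ^ (i - 1)) := by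
      ext y
      simp only [Finset.mem_filter, Finset.mem_univ, true_and, Finset.mem_sdiff, hiff2 y]
    have hcardg : Nat.card {y : ZMod m // minimalPeriod g y = p ^ i}
        = (n ^ p ^ i - 1) - (n ^ p ^ (i - 1) - 1) := by
      rw [hcard _, hE, Finset.card_sdiff_of_subset hBA]
      have e1 := hcount i hik
      have e2 := hcount (i - 1) (by omega)
      rw [hcard _] at e1 e2
      rw [e1, e2]
    rw [htrans, hcardg, Nat.mul_div_cancel' hdv]
    have h1 : 1 ≤ n ^ p ^ (i - 1) := by have := hpow2 (i - 1); omega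
    omega
  · -- fixed points
    have hiff3 : ∀ x : ZMod m,
        ((n : ZMod m) * x - ((n : ZMod m) - 1) * b = x) ↔
          ((n - 1 : ℕ) : ZMod m) * (x - b) = 0 := by
      intro x
      have hc : ((n - 1 : ℕ) : ZMod m) = (n : ZMod m) - 1 := by
        push_cast [show 1 ≤ n by omega]
        rfl
      rw [hc]
      constructor
      · intro h
        linear_combination h
      · intro h
        linear_combination h
    have e : {x : ZMod m // (n : ZMod m) * x - ((n : ZMod m) - 1) * b = x}
        ≃ {y : ZMod m // ((n - 1 : ℕ) : ZMod m) * y = 0} :=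
      (Equiv.subRight b).subtypeEquiv (fun x => by
        rw [Equiv.subRight_apply]
        exact hiff3 x)
    rw [Nat.card_congr e]
    have hd : (n - 1) ∣ m := by
      have h := Nat.sub_dvd_pow_sub_pow n 1 (p ^ k)
      rw [one_pow] at h
      rw [hm]
      exact h
    exact card_mulker m (n - 1) hd (by omega)

/-- Cycle structure of `R_b` on `ZMod (n^(p^k) - 1)`: for each `1 ≤ i ≤ k` there are
exactly `(n^(p^i) - n^(p^(i-1)))/p^i` cycles of length `p^i` (equivalently, that many
elements of minimal period `p^i`, with `p^i` dividing the count), and `n - 1` fixed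
points. -/
theorem cycle_structure (p : ℕ) (hp : p.Prime) (n k : ℕ) (hn : 2 ≤ n) (hk : 1 ≤ k)
    (hnp : Nat.Coprime n p) (b : ZMod (n ^ p ^ k - 1)) :
    (∀ i, 1 ≤ i → i ≤ k →
      Nat.card {x : ZMod (n ^ p ^ k - 1) //
        Function.minimalPeriod
          (fun y : ZMod (n ^ p ^ k - 1) => (n : ZMod (n ^ p ^ k - 1)) * y - (n - 1) * b) x
          = p ^ i} = p ^ i * ((n ^ p ^ i - n ^ p ^ (i - 1)) / p ^ i) ∧
      p ^ i ∣ n ^ p ^ i - n ^ p ^ (i - 1)) ∧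
    Nat.card {x : ZMod (n ^ p ^ k - 1) //
      (n : ZMod (n ^ p ^ k - 1)) * x - (n - 1) * b = x} = n - 1 :=
  cycle_structure_aux p hp n k hn hk hnp _ rfl b
end
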